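/- arXiv:2111.08922 — 5 statements merged into one kernel-verified Lean document; each statement's English description precedes it below -/
import Mathlib

section
/- Let c, ĉ ∈ {0,1}^M be codes with R_c ≠ ∅ and R_ĉ ≠ ∅, differing exactly in their first K bits (K ≥ 1). Then there exists an index m ∈ {1,...,K} such that the code c̃ obtained from c by flipping bit m satisfies R_{c̃} ≠ ∅. (Hence c̃ differs from ĉ in K−1 bits.) -/
open Matrix

def polytope {P M : ℕ} (w : Fin M → Fin P → ℝ) (b : Fin M → ℝ) (c : Fin M → Bool) :
    Set (Fin P → ℝ) :=
  {x | ∀ m, if c m then 0 ≤ w m ⬝ᵥ x + b m else w m ⬝ᵥ x + b m ≤ 0}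

/-- Key connectivity step: if nonempty polytopes `R_c`, `R_c'` have codes differing exactly
in the first `K` bits (`K ≥ 1`), then some single flip among the first `K` bits of `c`
yields a nonempty polytope. -/
theorem exists_nonempty_one_flip {P M K : ℕ}
    (w : Fin M → Fin P → ℝ) (b : Fin M → ℝ) (c c' : Fin M → Bool)
    (hK1 : 1 ≤ K) (hKM : K ≤ M)
    (hdiff : ∀ m : Fin M, c m ≠ c' m ↔ (m : ℕ) < K)
    (h1 : (polytope w b c).Nonempty) (h2 : (polytope w b c').Nonempty) :
    ∃ m : Fin M, (m : ℕ) < K ∧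
      (polytope w b (Function.update c m (!c m))).Nonempty := by
  obtain ⟨x, hx⟩ := h1
  obtain ⟨y, hy⟩ := h2
  have hx' : ∀ m, if c m then 0 ≤ w m ⬝ᵥ x + b m else w m ⬝ᵥ x + b m ≤ 0 := hx
  have hy' : ∀ m, if c' m then 0 ≤ w m ⬝ᵥ y + b m else w m ⬝ᵥ y + b m ≤ 0 := hy
  set a : Fin M → ℝ := fun m => w m ⬝ᵥ x + b m with ha
  set d : Fin M → ℝ := fun m => w m ⬝ᵥ y + b m with hd
  by_cases hzero : ∃ m : Fin M, (m : ℕ) < K ∧ a m = 0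
  · obtain ⟨m, hmK, hm0⟩ := hzero
    refine ⟨m, hmK, x, ?_⟩
    intro m'
    by_cases h : m' = m
    · have h0 : w m ⬝ᵥ x + b m = 0 := hm0
      rw [h, Function.update_self, h0]
      split <;> simp
    · rw [Function.update_of_ne h]
      exact hx m'
  · push_neg at hzero
    -- sign facts
    have hsign : ∀ m : Fin M, (m : ℕ) < K →
        (c m = true → 0 < a m ∧ d m ≤ 0) ∧ (c m = false → a m < 0 ∧ 0 ≤ d m) := by
      intro m hm
      have hxm := hx' m
      have hym := hy' m
      have hne : c m ≠ c' m := (hdiff m).mpr hm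
      have ha0 : a m ≠ 0 := hzero m hm
      constructor <;> intro hc
      · have hc' : c' m = false := by
          cases h' : c' m
          · rfl
          · exact absurd (hc.trans h'.symm) hne
        rw [hc] at hxm; rw [hc'] at hym
        simp only [if_true, if_false] at hxm hym
        exact ⟨lt_of_le_of_ne hxm (Ne.symm ha0), hym⟩
      · have hc' : c' m = true := by
          cases h' : c' m
          · exact absurd (hc.trans h'.symm) hne
          · rfl
        rw [hc] at hxm; rw [hc'] at hym
        simp only [if_true, if_false] at hxm hym
        exact ⟨lt_of_le_of_ne hxm ha0, hym⟩
    set t : Fin M → ℝ := fun m => a m / (a m - d m) with ht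
    have hden : ∀ m : Fin M, (m : ℕ) < K →
        (c m = true → 0 < a m - d m) ∧ (c m = false → a m - d m < 0) := by
      intro m hm
      obtain ⟨h1', h2'⟩ := hsign m hm
      constructor <;> intro hc
      · obtain ⟨hA, hD⟩ := h1' hc; linarith
      · obtain ⟨hA, hD⟩ := h2' hc; linarith
    have htrange : ∀ m : Fin M, (m : ℕ) < K → 0 < t m ∧ t m ≤ 1 := by
      intro m hm
      obtain ⟨h1', h2'⟩ := hsign m hm
      obtain ⟨hd1, hd2⟩ := hden m hm
      cases hc : c m
      · obtain ⟨hA, hD⟩ := h2' hc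
        have hD' := hd2 hc
        constructor
        · exact div_pos_of_neg_of_neg hA hD'
        · rw [div_le_one_of_neg hD']; linarith
      · obtain ⟨hA, hD⟩ := h1' hc
        have hD' := hd1 hc
        constructor
        · exact div_pos hA hD'
        · rw [div_le_one hD']; linarith
    -- pick the minimizing index among the first K
    have hS : (Finset.univ.filter (fun m : Fin M => (m : ℕ) < K)).Nonempty := by
      refine ⟨⟨0, by omega⟩, ?_⟩
      simp; omega
    obtain ⟨m₀, hm₀S, hmin⟩ := (Finset.univ.filter (fun m : Fin M => (m : ℕ) < K)).exists_min_image t hS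
    have hm₀K : (m₀ : ℕ) < K := by simpa using hm₀S
    have hmin' : ∀ m : Fin M, (m : ℕ) < K → t m₀ ≤ t m := by
      intro m hm; exact hmin m (by simpa using hm)
    set t₀ := t m₀ with ht₀
    obtain ⟨ht₀pos, ht₀le⟩ := htrange m₀ hm₀K
    set z : Fin P → ℝ := (1 - t₀) • x + t₀ • y with hz
    have hval : ∀ m : Fin M, w m ⬝ᵥ z + b m = a m - t₀ * (a m - d m) := by
      intro m
      simp only [hz, dotProduct_add, dotProduct_smul, smul_eq_mul, ha, hd]
      ring
    refine ⟨m₀, hm₀K, z, ?_⟩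
    intro m
    by_cases hmm : m = m₀
    · subst hmm
      have hzero' : w m ⬝ᵥ z + b m = 0 := by
        rw [hval m]
        have : t₀ * (a m - d m) = a m := by
          rw [ht₀, ht]
          have hne : a m - d m ≠ 0 := by
            cases hc : c m
            · exact ne_of_lt ((hden m hm₀K).2 hc)
            · exact ne_of_gt ((hden m hm₀K).1 hc)
          field_simp
        rw [this]; ring
      rw [Function.update_self, hzero']
      split <;> simp
    · rw [Function.update_of_ne hmm]
      by_cases hmK : (m : ℕ) < K
      · have hle : t₀ ≤ t m := hmin' m hmK
        cases hc : c m
        · -- a m < 0, a m - d m < 0 : need  a m - t₀ (a m - d m) ≤ 0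
          have hD := (hden m hmK).2 hc
          have hcan : t m * (a m - d m) = a m := div_mul_cancel₀ _ (ne_of_lt hD)
          have hkey : a m ≤ t₀ * (a m - d m) := by
            have := mul_le_mul_of_nonpos_right hle (le_of_lt hD)
            linarith
          simp only [hc, Bool.false_eq_true, if_false, hval m]
          linarith
        · have hD := (hden m hmK).1 hc
          have hcan : t m * (a m - d m) = a m := div_mul_cancel₀ _ (ne_of_gt hD)
          have hkey : t₀ * (a m - d m) ≤ a m := by
            have := mul_le_mul_of_nonneg_right hle (le_of_lt hD)
            linarith
          simp only [hc, if_true, hval m]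
          linarith
      · have heq : c m = c' m := by
          by_contra hne
          exact hmK ((hdiff m).mp hne)
        have hxm := hx' m
        have hym := hy' m
        rw [← heq] at hym
        cases hc : c m
        · simp only [hc, Bool.false_eq_true, if_false] at hxm hym
          have hxm' : a m ≤ 0 := hxm
          have hym' : d m ≤ 0 := hym
          simp only [hc, Bool.false_eq_true, if_false, hval m]
          nlinarith
        · simp only [hc, if_true] at hxm hym
          have hxm' : 0 ≤ a m := hxm
          have hym' : 0 ≤ d m := hym
          simp only [hc, if_true, hval m]
          nlinarith
end

section
/- Consider the graph G whose vertices are the codes c ∈ {0,1}^M with R_c ≠ ∅, with an edge between c and ĉ whenever they differ in exactly one bit and both R_c, R_ĉ are nonempty. Then G is connected: for any two nonempty polytopes R_c and R_ĉ, there is a path c = c^(0), c^(1), ..., c^(T) = ĉ in G where consecutive codes differ in one bit and every R_{c^(t)} is nonempty. -/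
open Matrix

private lemma dot_combo {P : ℕ} (w : Fin P → ℝ) (b : ℝ) (x x' : Fin P → ℝ) (s : ℝ) :
    w ⬝ᵥ ((1 - s) • x + s • x') + b
      = (1 - s) * (w ⬝ᵥ x + b) + s * (w ⬝ᵥ x' + b) := by
  simp [dotProduct_add, dotProduct_smul, smul_eq_mul]
  ring

private lemma cross_zero {u v : ℝ} (h : u ≠ v) :
    (1 - u / (u - v)) * u + (u / (u - v)) * v = 0 := by
  have hd : u - v ≠ 0 := sub_ne_zero.2 h
  field_simp
  ring

private lemma exists_flip {P M : ℕ} (w : Fin M → Fin P → ℝ) (b : Fin M → ℝ)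
    {c c' : Fin M → Bool} {x x' : Fin P → ℝ}
    (hx : x ∈ polytope w b c) (hx' : x' ∈ polytope w b c')
    (hne : ∃ m, c m ≠ c' m) :
    ∃ (m : Fin M) (y : Fin P → ℝ), c m ≠ c' m ∧ y ∈ polytope w b c ∧
      y ∈ polytope w b (Function.update c m (!(c m))) := by
  classical
  set a : Fin M → ℝ := fun m => w m ⬝ᵥ x + b m with ha
  set a' : Fin M → ℝ := fun m => w m ⬝ᵥ x' + b m with ha'
  set t : Fin M → ℝ := fun m => if a m = a' m then 0 else a m / (a m - a' m) with ht
  have hsig : ∀ m, c m ≠ c' m →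
      (c m = true ∧ 0 ≤ a m ∧ a' m ≤ 0) ∨ (c m = false ∧ a m ≤ 0 ∧ 0 ≤ a' m) := by
    intro m hm
    have h1 : if c m = true then 0 ≤ a m else a m ≤ 0 := hx m
    have h2 : if c' m = true then 0 ≤ a' m else a' m ≤ 0 := hx' m
    cases hcm : c m with
    | false =>
      have hcm' : c' m = true := by cases h : c' m <;> simp_all
      rw [hcm] at h1; rw [hcm'] at h2
      simp only [Bool.false_eq_true, if_false, if_true] at h1 h2
      exact Or.inr ⟨rfl, h1, h2⟩
    | true =>
      have hcm' : c' m = false := by cases h : c' m <;> simp_all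
      rw [hcm] at h1; rw [hcm'] at h2
      simp only [Bool.false_eq_true, if_false, if_true] at h1 h2
      exact Or.inl ⟨rfl, h1, h2⟩
  have key : ∀ m, c m ≠ c' m → 0 ≤ t m ∧ t m ≤ 1 ∧
      ((1 - t m) * a m + t m * a' m = 0) := by
    intro m hm
    by_cases heq : a m = a' m
    · have h0 : a m = 0 := by
        rcases hsig m hm with ⟨_, hu, hv⟩ | ⟨_, hu, hv⟩
        · exact le_antisymm (heq ▸ hv) hu
        · exact le_antisymm hu (heq ▸ hv)
      have h0' : a' m = 0 := heq ▸ h0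
      refine ⟨by simp [ht, heq], by simp [ht, heq], by simp [h0, h0']⟩
    · have hz := cross_zero heq
      have htm : t m = a m / (a m - a' m) := by simp [ht, heq]
      rcases hsig m hm with ⟨_, hu, hv⟩ | ⟨_, hu, hv⟩
      · have hlt : a' m < a m := lt_of_le_of_ne (hv.trans hu) (fun h => heq h.symm)
        have hd : 0 < a m - a' m := sub_pos.2 hlt
        refine ⟨?_, ?_, ?_⟩
        · rw [htm]; exact div_nonneg hu hd.le
        · rw [htm, div_le_one hd]; linarith
        · rw [htm]; exact hz
      · have hlt : a m < a' m := lt_of_le_of_ne (hu.trans hv) heq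
        have hd : 0 < a' m - a m := sub_pos.2 hlt
        have htm' : t m = (-(a m)) / (a' m - a m) := by
          rw [htm, show a' m - a m = -(a m - a' m) by ring, neg_div_neg_eq]
        refine ⟨?_, ?_, ?_⟩
        · rw [htm']; exact div_nonneg (by linarith) hd.le
        · rw [htm', div_le_one hd]; linarith
        · rw [htm]; exact hz
  obtain ⟨m1, hm1⟩ := hne
  have hDne : (Finset.univ.filter (fun m => c m ≠ c' m)).Nonempty :=
    ⟨m1, by simpa using hm1⟩
  obtain ⟨m0, hm0D, hmin⟩ := Finset.exists_min_image _ t hDne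
  have hm0 : c m0 ≠ c' m0 := by simpa using hm0D
  obtain ⟨hs0, hs1, hzero0⟩ := key m0 hm0
  set s : ℝ := t m0 with hs
  set y : Fin P → ℝ := (1 - s) • x + s • x' with hy
  have hval : ∀ m, w m ⬝ᵥ y + b m = (1 - s) * a m + s * a' m := by
    intro m
    exact dot_combo (w m) (b m) x x' s
  have hyc : y ∈ polytope w b c := by
    intro m
    show if c m = true then 0 ≤ w m ⬝ᵥ y + b m else w m ⬝ᵥ y + b m ≤ 0
    have h1 : if c m = true then 0 ≤ a m else a m ≤ 0 := hx m
    have h2 : if c' m = true then 0 ≤ a' m else a' m ≤ 0 := hx' m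
    rw [hval m]
    by_cases hmne : c m = c' m
    · rw [← hmne] at h2
      cases hcm : c m with
      | false =>
        rw [hcm] at h1 h2
        simp only [Bool.false_eq_true, if_false] at h1 h2 ⊢
        have e1 := mul_nonpos_of_nonneg_of_nonpos (by linarith : (0:ℝ) ≤ 1 - s) h1
        have e2 := mul_nonpos_of_nonneg_of_nonpos hs0 h2
        linarith
      | true =>
        rw [hcm] at h1 h2
        simp only [if_true] at h1 h2 ⊢
        have e1 := mul_nonneg (by linarith : (0:ℝ) ≤ 1 - s) h1
        have e2 := mul_nonneg hs0 h2
        linarith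
    · have hst : s ≤ t m := hmin m (by simpa using hmne)
      obtain ⟨ht0, ht1, hz⟩ := key m hmne
      rcases hsig m hmne with ⟨hcm, hu, hv⟩ | ⟨hcm, hu, hv⟩
      · rw [hcm]
        simp only [if_true]
        nlinarith [mul_nonneg (by linarith : (0:ℝ) ≤ t m - s)
          (by linarith : (0:ℝ) ≤ a m - a' m)]
      · rw [hcm]
        simp only [Bool.false_eq_true, if_false]
        nlinarith [mul_nonneg (by linarith : (0:ℝ) ≤ t m - s)
          (by linarith : (0:ℝ) ≤ a' m - a m)]
  have hzero : w m0 ⬝ᵥ y + b m0 = 0 := by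
    rw [hval m0]; exact hzero0
  refine ⟨m0, y, hm0, hyc, ?_⟩
  intro m
  by_cases hmm : m = m0
  · subst hmm
    show if (Function.update c m (!(c m)) m) = true then 0 ≤ w m ⬝ᵥ y + b m
      else w m ⬝ᵥ y + b m ≤ 0
    rw [Function.update_self, hzero]
    cases h : !(c m) <;> simp
  · show if (Function.update c m0 (!(c m0)) m) = true then 0 ≤ w m ⬝ᵥ y + b m
      else w m ⬝ᵥ y + b m ≤ 0
    rw [Function.update_of_ne hmm]
    exact hyc m

private lemma polytope_aux {P M : ℕ} (w : Fin M → Fin P → ℝ) (b : Fin M → ℝ)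
    (c' : Fin M → Bool) (x' : Fin P → ℝ) (hx' : x' ∈ polytope w b c') :
    ∀ n (c : Fin M → Bool) (x : Fin P → ℝ), x ∈ polytope w b c →
      (Finset.univ.filter (fun m => c m ≠ c' m)).card ≤ n →
      ∃ (T : ℕ) (p : ℕ → Fin M → Bool),
        p 0 = c ∧ p T = c' ∧
        (∀ t ≤ T, (polytope w b (p t)).Nonempty) ∧
        (∀ t < T, ∃! m : Fin M, p t m ≠ p (t + 1) m) := by
  classical
  intro n
  induction n with
  | zero =>
    intro c x hx hcard
    have hcc : c = c' := by
      funext m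
      by_contra hm
      have : m ∈ Finset.univ.filter (fun m => c m ≠ c' m) := by simpa using hm
      have := Finset.card_pos.mpr ⟨m, this⟩
      omega
    subst hcc
    exact ⟨0, fun _ => c, rfl, rfl, fun t _ => ⟨x, hx⟩, fun t ht => absurd ht (by omega)⟩
  | succ n ih =>
    intro c x hx hcard
    by_cases hcc : c = c'
    · subst hcc
      exact ⟨0, fun _ => c, rfl, rfl, fun t _ => ⟨x, hx⟩, fun t ht => absurd ht (by omega)⟩
    · have hne : ∃ m, c m ≠ c' m := by
        by_contra h
        push_neg at h
        exact hcc (funext fun m => h m)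
      obtain ⟨m0, y, hm0, hyc, hyc1⟩ := exists_flip w b hx hx' hne
      set c₁ : Fin M → Bool := Function.update c m0 (!(c m0)) with hc₁
      have hfilter : Finset.univ.filter (fun m => c₁ m ≠ c' m)
          = (Finset.univ.filter (fun m => c m ≠ c' m)).erase m0 := by
        ext k
        simp only [Finset.mem_filter, Finset.mem_erase, Finset.mem_univ, true_and]
        by_cases hk : k = m0
        · subst hk
          simp only [hc₁, Function.update_self]
          constructor
          · intro h
            exfalso
            apply h
            cases h1 : c k <;> cases h2 : c' k <;> simp_all
          · intro h
            exact absurd rfl h.1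
        · simp only [hc₁, Function.update_of_ne hk]
          tauto
      have hm0mem : m0 ∈ Finset.univ.filter (fun m => c m ≠ c' m) := by simpa using hm0
      have hcard1 : (Finset.univ.filter (fun m => c₁ m ≠ c' m)).card ≤ n := by
        rw [hfilter, Finset.card_erase_of_mem hm0mem]
        have := Finset.card_pos.mpr ⟨m0, hm0mem⟩
        omega
      obtain ⟨T, p, hp0, hpT, hpne, hpu⟩ := ih c₁ y hyc1 hcard1
      refine ⟨T + 1, fun t => if t = 0 then c else p (t - 1), by simp, ?_, ?_, ?_⟩
      · simp only [Nat.succ_ne_zero, if_neg]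
        simpa using hpT
      · intro t htT
        cases t with
        | zero => exact ⟨x, by simpa using hx⟩
        | succ k =>
          simp only [Nat.succ_ne_zero, if_neg, Nat.add_sub_cancel]
          exact hpne k (by omega)
      · intro t htT
        cases t with
        | zero =>
          simp only [if_pos rfl, if_neg (Nat.one_ne_zero), Nat.sub_self, hp0]
          refine ⟨m0, ?_, ?_⟩
          · simp [hc₁, Function.update_self]
          · intro m hm
            by_contra hmm
            rw [hc₁, Function.update_of_ne hmm] at hm
            exact hm rfl
        | succ k =>
          have h1 : k + 1 ≠ 0 := Nat.succ_ne_zero k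
          have h2 : k + 1 + 1 ≠ 0 := Nat.succ_ne_zero _
          simp only [if_neg h1, if_neg h2, Nat.add_sub_cancel]
          exact hpu k (by omega)

/-- The adjacency graph on nonempty polytopes is connected: any two nonempty polytopes
are joined by a path of codes, consecutive ones differing in exactly one bit, all with
nonempty polytopes. -/
theorem polytope_graph_connected {P M : ℕ}
    (w : Fin M → Fin P → ℝ) (b : Fin M → ℝ) (c c' : Fin M → Bool)
    (h1 : (polytope w b c).Nonempty) (h2 : (polytope w b c').Nonempty) :
    ∃ (T : ℕ) (p : ℕ → Fin M → Bool),
      p 0 = c ∧ p T = c' ∧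
      (∀ t ≤ T, (polytope w b (p t)).Nonempty) ∧
      (∀ t < T, ∃! m : Fin M, p t m ≠ p (t + 1) m) := by
  obtain ⟨x, hx⟩ := h1
  obtain ⟨x', hx'⟩ := h2
  exact polytope_aux w b c' x' hx'
    (Finset.univ.filter (fun m => c m ≠ c' m)).card c x hx le_rfl
end

section
/- Let f : ℝ^P → ℝ be a one-hidden-layer ReLU network (scalar output) and let B ⊆ ℝ^P be a nonempty compact convex set. If for every code c ∈ {0,1}^M with R_c ∩ B ≠ ∅ the affine function x ↦ ⟨ŵ_c, x⟩ + b̂_c (the local linear model of f on R_c) has nonnegative partial derivative in coordinate j (i.e., (ŵ_c)_j ≥ 0), then f is monotonically nondecreasing in coordinate j on B: for x, y ∈ B with x_k = y_k for all k ≠ j and x_j ≤ y_j, f(x) ≤ f(y). -/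
/-!
Restrict the network to the segment from `x` to `y`, which is parallel to the `j`-th axis.
Since each pre-activation is affine along the segment, its sign is constant on a right
neighbourhood of every parameter `t`; so to the right of `t` the segment stays in a single
region `R_c`, and the network agrees there with its local affine model. Hence the restriction
has a right derivative at `t`, namely `(y j - x j) (ŵ_c)_j ≥ 0` with `R_c` meeting `B` by
convexity, and a continuous function with nonnegative right derivatives is monotone.
-/

open Matrix

open Filter Topology Set

def reluNet {P M : ℕ} (W : Fin M → Fin P → ℝ) (b : Fin M → ℝ) (wo : Fin M → ℝ) (bo : ℝ)
    (x : Fin P → ℝ) : ℝ :=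
  wo ⬝ᵥ (fun m => max (W m ⬝ᵥ x + b m) 0) + bo

/-- The local linear model `x ↦ ⟨ŵ_c, x⟩ + b̂_c` of the network on `R_c = polytope W b c`. -/
def localModel {P M : ℕ} (W : Fin M → Fin P → ℝ) (b : Fin M → ℝ) (wo : Fin M → ℝ) (bo : ℝ)
    (c : Fin M → Bool) (x : Fin P → ℝ) : ℝ :=
  wo ⬝ᵥ (fun m => if c m then W m ⬝ᵥ x + b m else 0) + bo

/-- `⟨ŵ_c, v⟩`, the slope of `localModel W b wo bo c` in the direction `v`. -/
def localSlope {P M : ℕ} (W : Fin M → Fin P → ℝ) (wo : Fin M → ℝ) (c : Fin M → Bool)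
    (v : Fin P → ℝ) : ℝ :=
  wo ⬝ᵥ fun m => if c m then W m ⬝ᵥ v else 0

theorem le_of_hasDerivWithinAt_Ici_nonneg {f f' : ℝ → ℝ} {a b : ℝ} (hab : a ≤ b)
    (hf : ContinuousOn f (Icc a b)) (hf' : ∀ t ∈ Ico a b, HasDerivWithinAt f (f' t) (Ici t) t)
    (hf'_nonneg : ∀ t ∈ Ico a b, 0 ≤ f' t) : f a ≤ f b :=
  image_le_of_deriv_right_le_deriv_boundary continuousOn_const
    (fun t _ => (hasDerivWithinAt_const t _ (f a))) le_rfl hf hf' hf'_nonneg ⟨hab, le_rfl⟩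

theorem eventually_nonneg_or_eventually_nonpos_nhdsGE (a c t : ℝ) :
    (∀ᶠ s in 𝓝[≥] t, 0 ≤ c + s * a) ∨ ∀ᶠ s in 𝓝[≥] t, c + s * a ≤ 0 := by
  have hcont : Continuous fun s : ℝ => c + s * a := by fun_prop
  rcases lt_trichotomy (c + t * a) 0 with hneg | hzero | hpos
  · right
    exact ((hcont.tendsto t).eventually (eventually_lt_nhds hneg)).filter_mono nhdsWithin_le_nhds
      |>.mono fun _ h => h.le
  · have hline : ∀ s, c + s * a = (s - t) * a := fun s => by linear_combination hzero
    simp only [hline]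
    rcases le_total 0 a with ha | ha
    · left
      filter_upwards [self_mem_nhdsWithin] with s hs using mul_nonneg (sub_nonneg.2 hs) ha
    · right
      filter_upwards [self_mem_nhdsWithin] with s hs
        using mul_nonpos_of_nonneg_of_nonpos (sub_nonneg.2 hs) ha
  · left
    exact ((hcont.tendsto t).eventually (eventually_gt_nhds hpos)).filter_mono nhdsWithin_le_nhds
      |>.mono fun _ h => h.le

section ReluNet

variable {P M : ℕ} (W : Fin M → Fin P → ℝ) (b : Fin M → ℝ) (wo : Fin M → ℝ) (bo : ℝ)

theorem preactivation_add_smul (m : Fin M) (x v : Fin P → ℝ) (s : ℝ) :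
    W m ⬝ᵥ (x + s • v) + b m = (W m ⬝ᵥ x + b m) + s * (W m ⬝ᵥ v) := by
  rw [dotProduct_add, dotProduct_smul, smul_eq_mul]
  ring

theorem exists_eventually_add_smul_mem_polytope (x v : Fin P → ℝ) (t : ℝ) :
    ∃ c, ∀ᶠ s in 𝓝[≥] t, x + s • v ∈ polytope W b c := by
  have hsign : ∀ m, ∃ β : Bool, ∀ᶠ s in 𝓝[≥] t,
      if β then 0 ≤ W m ⬝ᵥ (x + s • v) + b m else W m ⬝ᵥ (x + s • v) + b m ≤ 0 := by
    intro m
    simp only [preactivation_add_smul]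
    rcases eventually_nonneg_or_eventually_nonpos_nhdsGE (W m ⬝ᵥ v) (W m ⬝ᵥ x + b m) t with h | h
    · exact ⟨true, h⟩
    · exact ⟨false, h⟩
  choose c hc using hsign
  exact ⟨c, eventually_all.2 hc⟩

theorem reluNet_eq_localModel_of_mem_polytope {c : Fin M → Bool} {x : Fin P → ℝ}
    (hx : x ∈ polytope W b c) : reluNet W b wo bo x = localModel W b wo bo c x := by
  unfold reluNet localModel
  congr 2
  funext m
  have hm := hx m
  split_ifs at hm ⊢
  · exact max_eq_left hm
  · exact max_eq_right hm

theorem localModel_add_smul (c : Fin M → Bool) (x v : Fin P → ℝ) (s : ℝ) :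
    localModel W b wo bo c (x + s • v) = localModel W b wo bo c x + s * localSlope W wo c v := by
  have hsplit : (fun m => if c m then W m ⬝ᵥ (x + s • v) + b m else 0) =
      (fun m => if c m then W m ⬝ᵥ x + b m else 0) + s • fun m => if c m then W m ⬝ᵥ v else 0 := by
    funext m
    simp only [preactivation_add_smul, Pi.add_apply, Pi.smul_apply, smul_eq_mul]
    split_ifs <;> ring
  rw [localModel, localModel, localSlope, hsplit, dotProduct_add, dotProduct_smul, smul_eq_mul]
  ring

theorem exists_hasDerivWithinAt_reluNet_line (x v : Fin P → ℝ) (t : ℝ) :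
    ∃ c, x + t • v ∈ polytope W b c ∧
      HasDerivWithinAt (fun s => reluNet W b wo bo (x + s • v)) (localSlope W wo c v)
        (Ici t) t := by
  obtain ⟨c, hc⟩ := exists_eventually_add_smul_mem_polytope W b x v t
  have hmodel :
      HasDerivAt (fun s => localModel W b wo bo c (x + s • v)) (localSlope W wo c v) t := by
    simp only [localModel_add_smul]
    simpa using
      ((hasDerivAt_id t).mul_const (localSlope W wo c v)).const_add (localModel W b wo bo c x)
  have ht : x + t • v ∈ polytope W b c := hc.self_of_nhdsWithin self_mem_Ici
  refine ⟨c, ht, hmodel.hasDerivWithinAt.congr_of_eventuallyEq ?_ ?_⟩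
  · exact hc.mono fun s hs => reluNet_eq_localModel_of_mem_polytope W b wo bo hs
  · exact reluNet_eq_localModel_of_mem_polytope W b wo bo ht

theorem continuous_reluNet : Continuous (reluNet W b wo bo) := by
  unfold reluNet dotProduct
  fun_prop

theorem reluNet_le_add_of_localSlope_nonneg (x v : Fin P → ℝ)
    (hslope : ∀ c, ∀ t ∈ Ico (0 : ℝ) 1, x + t • v ∈ polytope W b c → 0 ≤ localSlope W wo c v) :
    reluNet W b wo bo x ≤ reluNet W b wo bo (x + v) := by
  choose c hc hderiv using exists_hasDerivWithinAt_reluNet_line W b wo bo x v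
  have hcont : Continuous fun s : ℝ => reluNet W b wo bo (x + s • v) :=
    (continuous_reluNet W b wo bo).comp (by fun_prop)
  simpa using le_of_hasDerivWithinAt_Ici_nonneg zero_le_one hcont.continuousOn
    (fun t _ => hderiv t) (fun t ht => hslope (c t) t ht (hc t))

theorem localSlope_single (c : Fin M → Bool) (j : Fin P) (δ : ℝ) :
    localSlope W wo c (Pi.single j δ) = δ * ∑ m, wo m * if c m then W m j else 0 := by
  rw [localSlope, dotProduct, Finset.mul_sum]
  refine Finset.sum_congr rfl fun m _ => ?_
  split_ifs
  · rw [dotProduct_single]; ring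
  · simp

end ReluNet

theorem sub_eq_single_of_forall_ne_eq {ι G : Type*} [DecidableEq ι] [AddGroup G] {x y : ι → G}
    {j : ι}
    (h : ∀ k, k ≠ j → x k = y k) : y - x = Pi.single j (y j - x j) := by
  funext k
  by_cases hk : k = j
  · subst hk; simp
  · simp [hk, h k hk]

theorem monotone_of_local_slopes_nonneg_general {P M : ℕ}
    (W : Fin M → Fin P → ℝ) (b : Fin M → ℝ) (wo : Fin M → ℝ) (bo : ℝ)
    (B : Set (Fin P → ℝ)) (hBconv : Convex ℝ B)
    (j : Fin P)
    (hslope : ∀ c : Fin M → Bool, (polytope W b c ∩ B).Nonempty →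
      0 ≤ ∑ m, wo m * (if c m then W m j else 0)) :
    ∀ x ∈ B, ∀ y ∈ B, (∀ k, k ≠ j → x k = y k) → x j ≤ y j →
      wo ⬝ᵥ (fun m => max (W m ⬝ᵥ x + b m) 0) + bo
        ≤ wo ⬝ᵥ (fun m => max (W m ⬝ᵥ y + b m) 0) + bo := by
  intro x hx y hy hoff hxy
  have key := reluNet_le_add_of_localSlope_nonneg W b wo bo x (y - x) fun c t ht hpoly => by
    have hB : x + t • (y - x) ∈ B := hBconv.add_smul_sub_mem hx hy ⟨ht.1, ht.2.le⟩
    rw [sub_eq_single_of_forall_ne_eq hoff, localSlope_single]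
    exact mul_nonneg (sub_nonneg.2 hxy) (hslope c ⟨_, hpoly, hB⟩)
  simpa [reluNet] using key

/-- Local monotonicity verification: if every local linear model of the scalar ReLU
network on a polytope meeting `B` has nonnegative coefficient in coordinate `j`, then
the network is nondecreasing in coordinate `j` on the compact convex set `B`. -/
theorem monotone_of_local_slopes_nonneg {P M : ℕ}
    (W : Fin M → Fin P → ℝ) (b : Fin M → ℝ) (wo : Fin M → ℝ) (bo : ℝ)
    (B : Set (Fin P → ℝ)) (hB : B.Nonempty) (hBc : IsCompact B) (hBconv : Convex ℝ B)
    (j : Fin P)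
    (hslope : ∀ c : Fin M → Bool, (polytope W b c ∩ B).Nonempty →
      0 ≤ ∑ m, wo m * (if c m then W m j else 0)) :
    ∀ x ∈ B, ∀ y ∈ B, (∀ k, k ≠ j → x k = y k) → x j ≤ y j →
      wo ⬝ᵥ (fun m => max (W m ⬝ᵥ x + b m) 0) + bo
        ≤ wo ⬝ᵥ (fun m => max (W m ⬝ᵥ y + b m) 0) + bo :=
  monotone_of_local_slopes_nonneg_general W b wo bo B hBconv j hslope
end

section
/- Let c, ĉ ∈ {0,1}^M differ exactly in bits 1,...,K, let B ⊆ ℝ^P be a closed convex set given by finitely many affine inequalities, and suppose R_c ∩ B ≠ ∅ and R_ĉ ∩ B ≠ ∅. Then there exists m ∈ {1,...,K} such that flipping bit m of c yields a code c̃ with R_{c̃} ∩ B ≠ ∅. Consequently, the adjacency graph restricted to codes whose polytopes meet B is connected. -/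
open Matrix

lemma dot_line {P : ℕ} (w x y : Fin P → ℝ) (t : ℝ) :
    w ⬝ᵥ (fun j => x j + t * (y j - x j)) = w ⬝ᵥ x + t * (w ⬝ᵥ y - w ⬝ᵥ x) := by
  simp only [dotProduct, Finset.mul_sum, ← Finset.sum_sub_distrib, ← Finset.sum_add_distrib]
  apply Finset.sum_congr rfl
  intros; ring

lemma flip_lemma {P M N : ℕ} (w : Fin M → Fin P → ℝ) (b : Fin M → ℝ)
    (v : Fin N → Fin P → ℝ) (d : Fin N → ℝ)
    (c c' : Fin M → Bool) (m0 : Fin M) (hm0 : c m0 ≠ c' m0)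
    (h1 : (polytope w b c ∩ {x | ∀ i, v i ⬝ᵥ x + d i ≤ 0}).Nonempty)
    (h2 : (polytope w b c' ∩ {x | ∀ i, v i ⬝ᵥ x + d i ≤ 0}).Nonempty) :
    ∃ m : Fin M, c m ≠ c' m ∧
      (polytope w b (Function.update c m (!c m)) ∩ {x | ∀ i, v i ⬝ᵥ x + d i ≤ 0}).Nonempty := by
  obtain ⟨x, hx, hxB⟩ := h1
  obtain ⟨y, hy, hyB⟩ := h2
  set g0 : Fin M → ℝ := fun m => w m ⬝ᵥ x + b m with hg0
  set g1 : Fin M → ℝ := fun m => w m ⬝ᵥ y + b m with hg1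
  set τ : Fin M → ℝ := fun m => if g0 m = g1 m then 0 else g0 m / (g0 m - g1 m) with hτ
  have hc0 : ∀ m, if c m then 0 ≤ g0 m else g0 m ≤ 0 := hx
  have hc1 : ∀ m, c m ≠ c' m → (if c m then g1 m ≤ 0 else 0 ≤ g1 m) := by
    intro m hm
    have := hy m
    cases hcm : c m <;> cases hcm' : c' m <;> simp_all
  have key : ∀ m, c m ≠ c' m →
      0 ≤ τ m ∧ τ m ≤ 1 ∧ g0 m + τ m * (g1 m - g0 m) = 0 ∧
      (∀ t, 0 ≤ t → t ≤ τ m → (if c m then 0 ≤ g0 m + t * (g1 m - g0 m)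
        else g0 m + t * (g1 m - g0 m) ≤ 0)) := by
    intro m hm
    have h0 := hc0 m
    have h1 := hc1 m hm
    by_cases he : g0 m = g1 m
    · have hz : g0 m = 0 := by cases hcm : c m <;> simp_all <;> linarith
      have h1' : g1 m = 0 := by rw [← he]; exact hz
      refine ⟨by simp [hτ, he], by simp [hτ, he], by simp [hτ, he, hz, h1'], ?_⟩
      intro t ht0 ht1
      simp only [hτ, he, if_pos] at ht1
      have ht : t = 0 := le_antisymm (by simpa using ht1) ht0
      cases hcm : c m <;> simp [ht, hz, h1']
    · have hne : g0 m - g1 m ≠ 0 := sub_ne_zero_of_ne he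
      have hτm : τ m = g0 m / (g0 m - g1 m) := by simp [hτ, he]
      cases hcm : c m <;> simp only [hcm] at h0 h1 <;>
        simp only [Bool.false_eq_true, if_false, if_true] at h0 h1
      · -- c m = false : g0 ≤ 0, 0 ≤ g1, g0 - g1 < 0
        have hs : g0 m - g1 m < 0 :=
          lt_of_le_of_ne (by linarith) hne
        have ht1 : τ m ≤ 1 := by
          rw [hτm, div_le_one_of_neg hs]; linarith
        have ht0 : 0 ≤ τ m := by
          rw [hτm]
          rw [le_div_iff_of_neg hs]; linarith
        refine ⟨ht0, ht1, by rw [hτm]; field_simp; ring, ?_⟩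
        intro t ht0' htτ
        rw [hτm, le_div_iff_of_neg hs] at htτ
        simp only [hcm, Bool.false_eq_true, if_false]
        nlinarith
      · -- c m = true : 0 ≤ g0, g1 ≤ 0, 0 < g0 - g1
        have hs : 0 < g0 m - g1 m :=
          lt_of_le_of_ne (by linarith) (Ne.symm hne)
        have ht1 : τ m ≤ 1 := by
          rw [hτm, div_le_one hs]; linarith
        have ht0 : 0 ≤ τ m := by
          rw [hτm]; exact div_nonneg h0 hs.le
        refine ⟨ht0, ht1, by rw [hτm]; field_simp; ring, ?_⟩
        intro t ht0' htτ
        rw [hτm, le_div_iff₀ hs] at htτ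
        simp only [hcm, if_true]
        nlinarith
  have hD : m0 ∈ Finset.univ.filter (fun m => c m ≠ c' m) := by simp [hm0]
  obtain ⟨ms, hms, hmin⟩ := Finset.exists_min_image _ τ ⟨m0, hD⟩
  have hmsd : c ms ≠ c' ms := by simpa using hms
  obtain ⟨hms0, hms1, hmsz, _⟩ := key ms hmsd
  set t : ℝ := τ ms with htdef
  refine ⟨ms, hmsd, ⟨fun j => x j + t * (y j - x j), ?_, ?_⟩⟩
  · intro m
    have hval : w m ⬝ᵥ (fun j => x j + t * (y j - x j)) + b m
        = g0 m + t * (g1 m - g0 m) := by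
      rw [dot_line]; simp only [hg0, hg1]; ring
    by_cases hmm : m = ms
    · subst hmm
      simp only [Function.update_self]
      rw [hval, hmsz]
      cases c m <;> simp
    · rw [Function.update_of_ne hmm]
      simp only [Set.mem_setOf_eq] at *
      by_cases hmd : c m ≠ c' m
      · have hle : t ≤ τ m := hmin m (by simp [hmd])
        have := (key m hmd).2.2.2 t hms0 hle
        rw [hval]; exact this
      · push_neg at hmd
        have h0 := hc0 m
        have h1' := hy m
        rw [← hmd] at h1'
        rw [hval]
        have hg1m : g1 m = w m ⬝ᵥ y + b m := rfl
        cases hcm : c m <;> rw [hcm] at h0 h1' <;>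
          simp only [Bool.false_eq_true, if_false, if_true] at h0 h1' ⊢ <;>
          rw [← hg1m] at h1'
        · nlinarith [mul_nonneg hms0 (neg_nonneg.mpr h1'),
            mul_nonneg (sub_nonneg.mpr hms1) (neg_nonneg.mpr h0)]
        · nlinarith [mul_nonneg hms0 h1', mul_nonneg (sub_nonneg.mpr hms1) h0]
  · intro i
    have hval : v i ⬝ᵥ (fun j => x j + t * (y j - x j)) + d i
        = (v i ⬝ᵥ x + d i) + t * ((v i ⬝ᵥ y + d i) - (v i ⬝ᵥ x + d i)) := by
      rw [dot_line]; ring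
    rw [hval]
    nlinarith [hxB i, hyB i, mul_nonneg hms0 (neg_nonneg.mpr (hyB i)),
      mul_nonneg (sub_nonneg.mpr hms1) (neg_nonneg.mpr (hxB i))]

lemma path_lemma {P M N : ℕ} (w : Fin M → Fin P → ℝ) (b : Fin M → ℝ)
    (v : Fin N → Fin P → ℝ) (d : Fin N → ℝ) :
    ∀ n (c c' : Fin M → Bool),
    (Finset.univ.filter (fun m => c m ≠ c' m)).card = n →
    (polytope w b c ∩ {x | ∀ i, v i ⬝ᵥ x + d i ≤ 0}).Nonempty →
    (polytope w b c' ∩ {x | ∀ i, v i ⬝ᵥ x + d i ≤ 0}).Nonempty →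
    ∃ (T : ℕ) (p : ℕ → Fin M → Bool),
        p 0 = c ∧ p T = c' ∧
        (∀ t ≤ T, (polytope w b (p t) ∩ {x | ∀ i, v i ⬝ᵥ x + d i ≤ 0}).Nonempty) ∧
        (∀ t < T, ∃! m : Fin M, p t m ≠ p (t + 1) m) := by
  intro n
  induction n with
  | zero =>
    intro c c' hcard h1 h2
    have hcc : c = c' := by
      funext m
      by_contra hne
      have : m ∈ Finset.univ.filter (fun m => c m ≠ c' m) := by simp [hne]
      rw [Finset.card_eq_zero.mp hcard] at this
      exact absurd this (Finset.notMem_empty m)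
    exact ⟨0, fun _ => c, rfl, hcc, fun t ht => by
      interval_cases t; exact h1, fun t ht => absurd ht (Nat.not_lt_zero t)⟩
  | succ n ih =>
    intro c c' hcard h1 h2
    have hne : (Finset.univ.filter (fun m => c m ≠ c' m)).Nonempty := by
      rw [← Finset.card_pos, hcard]; exact Nat.succ_pos n
    obtain ⟨m0, hm0⟩ := hne
    have hm0' : c m0 ≠ c' m0 := by simpa using hm0
    obtain ⟨m, hm, hflip⟩ := flip_lemma w b v d c c' m0 hm0' h1 h2
    set c₁ : Fin M → Bool := Function.update c m (!c m) with hc₁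
    have hc₁m : c₁ m = c' m := by
      rw [hc₁, Function.update_self]
      cases hcm : c m <;> cases hcm' : c' m <;> simp_all
    have hc₁ne : ∀ m', m' ≠ m → c₁ m' = c m' := fun m' h =>
      Function.update_of_ne h _ _
    have hcard' : (Finset.univ.filter (fun m' => c₁ m' ≠ c' m')).card = n := by
      have hset : Finset.univ.filter (fun m' => c₁ m' ≠ c' m')
          = (Finset.univ.filter (fun m' => c m' ≠ c' m')).erase m := by
        ext m'
        simp only [Finset.mem_filter, Finset.mem_erase, Finset.mem_univ, true_and]
        constructor
        · intro h
          have hm'm : m' ≠ m := by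
            rintro rfl; exact h (by rw [hc₁m])
          exact ⟨hm'm, by rwa [hc₁ne m' hm'm] at h⟩
        · rintro ⟨hm'm, h⟩
          rwa [hc₁ne m' hm'm]
      rw [hset, Finset.card_erase_of_mem (by simp [hm]), hcard]
      rfl
    obtain ⟨T, p, hp0, hpT, hpne, hpflip⟩ := ih c₁ c' hcard' hflip h2
    refine ⟨T + 1, fun t => if t = 0 then c else p (t - 1), by simp, ?_, ?_, ?_⟩
    · simp [hpT]
    · intro t ht
      rcases Nat.eq_zero_or_pos t with rfl | htpos
      · simpa using h1
      · have : t - 1 ≤ T := by omega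
        simpa [Nat.pos_iff_ne_zero.mp htpos] using hpne (t - 1) this
    · intro t ht
      rcases Nat.eq_zero_or_pos t with rfl | htpos
      · simp only [if_pos rfl, Nat.zero_add, if_neg (Nat.one_ne_zero)]
        refine ⟨m, ?_, ?_⟩
        · simp only [Nat.sub_self, hp0, hc₁]
          rw [Function.update_self]
          rcases Bool.eq_false_or_eq_true (c m) with h | h <;> simp [h]
        · intro m' hm'
          by_contra hm'm
          simp only [Nat.sub_self, hp0] at hm'
          exact hm' (hc₁ne m' hm'm).symm
      · have ht' : t - 1 < T := by omega
        have := hpflip (t - 1) ht'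
        have e1 : t - 1 + 1 = t := by omega
        simpa [Nat.pos_iff_ne_zero.mp htpos, e1] using this

/-- Connectivity step within a region `B` given by finitely many affine inequalities:
if `R_c` and `R_c'` both meet `B` and their codes differ exactly in the first `K` bits,
then flipping one of the first `K` bits of `c` yields a polytope meeting `B`;
consequently the adjacency graph of polytopes meeting `B` is connected. -/
theorem exists_one_flip_meeting_region {P M N K : ℕ}
    (w : Fin M → Fin P → ℝ) (b : Fin M → ℝ)
    (v : Fin N → Fin P → ℝ) (d : Fin N → ℝ)
    (B : Set (Fin P → ℝ)) (hB : B = {x | ∀ i, v i ⬝ᵥ x + d i ≤ 0})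
    (c c' : Fin M → Bool) (hK1 : 1 ≤ K) (hKM : K ≤ M)
    (hdiff : ∀ m : Fin M, c m ≠ c' m ↔ (m : ℕ) < K)
    (h1 : (polytope w b c ∩ B).Nonempty) (h2 : (polytope w b c' ∩ B).Nonempty) :
    (∃ m : Fin M, (m : ℕ) < K ∧
        (polytope w b (Function.update c m (!c m)) ∩ B).Nonempty) ∧
    (∃ (T : ℕ) (p : ℕ → Fin M → Bool),
        p 0 = c ∧ p T = c' ∧
        (∀ t ≤ T, (polytope w b (p t) ∩ B).Nonempty) ∧
        (∀ t < T, ∃! m : Fin M, p t m ≠ p (t + 1) m)) := by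
  subst hB
  have m0 : Fin M := ⟨0, lt_of_lt_of_le hK1 hKM⟩
  have hm0 : c ⟨0, lt_of_lt_of_le hK1 hKM⟩ ≠ c' ⟨0, lt_of_lt_of_le hK1 hKM⟩ :=
    (hdiff _).mpr hK1
  constructor
  · obtain ⟨m, hm, hflip⟩ := flip_lemma w b v d c c' _ hm0 h1 h2
    exact ⟨m, (hdiff m).mp hm, hflip⟩
  · exact path_lemma w b v d _ c c' rfl h1 h2
end

section
/- Let f : ℝ^P → ℝ be continuous and piecewise affine with pieces given by closed convex sets R_1,...,R_N covering a convex set B, f affine on each R_i with affine piece f_i. If all pieces meeting B have nonnegative j-th coefficient (i.e. ∂f_i/∂x_j ≥ 0 whenever R_i ∩ B is nonempty), then f is nondecreasing in coordinate j on B; and if some piece whose intersection with B has nonempty interior has negative j-th coefficient, then f is not nondecreasing in coordinate j on B. -/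
open Matrix

/-- Monotonicity of a continuous piecewise-affine function from its pieces: if all
pieces meeting `B` have nonnegative j-th coefficient then `f` is nondecreasing in
coordinate `j` on `B`; if some piece whose intersection with `B` has nonempty interior
has negative j-th coefficient, then `f` is not nondecreasing in coordinate `j` on `B`. -/
theorem piecewise_affine_monotonicity {P N : ℕ}
    (f : (Fin P → ℝ) → ℝ) (hf : Continuous f)
    (B : Set (Fin P → ℝ)) (hBconv : Convex ℝ B) (hBint : (interior B).Nonempty)
    (R : Fin N → Set (Fin P → ℝ))
    (hR : ∀ i, IsClosed (R i) ∧ Convex ℝ (R i))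
    (hcover : B ⊆ ⋃ i, R i)
    (a : Fin N → Fin P → ℝ) (β : Fin N → ℝ)
    (haff : ∀ i, ∀ x ∈ R i, f x = a i ⬝ᵥ x + β i) (j : Fin P) :
    ((∀ i, (R i ∩ B).Nonempty → 0 ≤ a i j) →
      ∀ x ∈ B, ∀ y ∈ B, (∀ k, k ≠ j → x k = y k) → x j ≤ y j → f x ≤ f y) ∧
    ((∃ i, (interior (R i ∩ B)).Nonempty ∧ a i j < 0) →
      ¬ (∀ x ∈ B, ∀ y ∈ B, (∀ k, k ≠ j → x k = y k) → x j ≤ y j → f x ≤ f y)) := by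
  constructor
  · -- first part
    intro hpos x hx y hy hxy hj
    set path : ℝ → (Fin P → ℝ) := fun t => x + t • (y - x) with hpath
    have hpath01 : path 0 = x := by simp [hpath]
    have hpath11 : path 1 = y := by simp [hpath]
    have hpathc : Continuous path := by
      apply continuous_const.add
      exact (continuous_id.smul continuous_const)
    have hpathB : ∀ t ∈ Set.Icc (0:ℝ) 1, path t ∈ B := by
      intro t ht
      have : path t = (1 - t) • x + t • y := by
        simp [hpath]; module
      rw [this]
      exact hBconv hx hy (by linarith [ht.2]) ht.1 (by ring)
    have hyx : y - x = Pi.single j (y j - x j) := by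
      funext k
      by_cases hk : k = j
      · subst hk; simp
      · simp [Pi.single_apply, hk, hxy k hk]
    have hdot : ∀ i t s, a i ⬝ᵥ path t - a i ⬝ᵥ path s
        = (t - s) * (a i j * (y j - x j)) := by
      intro i t s
      simp only [hpath]
      rw [dotProduct_add, dotProduct_add, dotProduct_smul, dotProduct_smul, hyx,
        dotProduct_single]
      ring_nf
    have key : ∀ (i : Fin N) (u v : ℝ), u ∈ Set.Icc (0:ℝ) 1 → v ∈ Set.Icc (0:ℝ) 1 →
        u ≤ v → path u ∈ R i → path v ∈ R i → f (path u) ≤ f (path v) := by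
      intro i u v hu hv huv hui hvi
      rw [haff i _ hui, haff i _ hvi]
      have hai : 0 ≤ a i j := hpos i ⟨path u, hui, hpathB u hu⟩
      have h2 := hdot i v u
      nlinarith [h2, mul_nonneg (sub_nonneg.2 huv) (mul_nonneg hai (sub_nonneg.2 hj))]
    -- local step
    have hloc : ∀ u ∈ Set.Ico (0:ℝ) 1, ∃ v, u < v ∧ v ≤ 1 ∧ f (path u) ≤ f (path v) := by
      intro u hu
      set T : Set ℝ := ⋃ i ∈ {i : Fin N | path u ∉ R i}, path ⁻¹' (R i) with hT
      have hTclosed : IsClosed T := by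
        apply Set.Finite.isClosed_biUnion (Set.toFinite _)
        intro i _
        exact (hR i).1.preimage hpathc
      have huT : u ∉ T := by
        intro h
        rcases Set.mem_iUnion₂.1 h with ⟨i, hi, hui⟩
        exact hi hui
      obtain ⟨ε, hε, hball⟩ := Metric.isOpen_iff.1 hTclosed.isOpen_compl u huT
      set v : ℝ := min (u + ε / 2) 1 with hv
      have huv : u < v := lt_min (by linarith) hu.2
      have hv1 : v ≤ 1 := min_le_right _ _
      have hvI : v ∈ Set.Icc (0:ℝ) 1 := ⟨le_of_lt (lt_of_le_of_lt hu.1 huv), hv1⟩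
      have hvball : v ∈ Metric.ball u ε := by
        rw [Metric.mem_ball, Real.dist_eq, abs_of_pos (by linarith)]
        have : v ≤ u + ε / 2 := min_le_left _ _
        linarith
      obtain ⟨i, hvi⟩ := Set.mem_iUnion.1 (hcover (hpathB v hvI))
      have hui : path u ∈ R i := by
        by_contra hui
        exact (hball hvball) (Set.mem_iUnion₂.2 ⟨i, hui, hvi⟩)
      exact ⟨v, huv, hv1, key i u v ⟨hu.1, le_of_lt hu.2⟩ hvI (le_of_lt huv) hui hvi⟩
    -- sup argument
    set A : Set ℝ := Set.Icc (0:ℝ) 1 ∩ {t | f (path 0) ≤ f (path t)} with hA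
    have hAclosed : IsClosed A :=
      isClosed_Icc.inter (isClosed_le continuous_const (hf.comp hpathc))
    have hA0 : (0:ℝ) ∈ A := ⟨⟨le_refl _, zero_le_one⟩, show f (path 0) ≤ f (path 0) from le_rfl⟩
    have hAbdd : BddAbove A := ⟨1, fun t ht => ht.1.2⟩
    have hcA : sSup A ∈ A := hAclosed.csSup_mem ⟨0, hA0⟩ hAbdd
    have hc1 : sSup A = 1 := by
      by_contra hne
      have hclt : sSup A < 1 := lt_of_le_of_ne hcA.1.2 hne
      obtain ⟨v, hv1, hv2, hv3⟩ := hloc (sSup A) ⟨hcA.1.1, hclt⟩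
      have : v ∈ A := ⟨⟨le_of_lt (lt_of_le_of_lt hcA.1.1 hv1), hv2⟩, le_trans hcA.2 hv3⟩
      exact absurd (le_csSup hAbdd this) (not_le.2 hv1)
    have : f (path 0) ≤ f (path 1) := by
      rw [← hc1]; exact hcA.2
    rwa [hpath01, hpath11] at this
  · -- second part
    rintro ⟨i, ⟨z, hz⟩, hai⟩ hmono
    obtain ⟨ε, hε, hball⟩ := Metric.isOpen_iff.1 isOpen_interior z hz
    have hzRB : z ∈ R i ∩ B := interior_subset hz
    set y : Fin P → ℝ := z + Pi.single j (ε / 2) with hy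
    have hyball : y ∈ Metric.ball z ε := by
      rw [Metric.mem_ball, dist_eq_norm]
      have : y - z = Pi.single j (ε / 2) := by simp [hy]
      rw [this, Pi.norm_single, Real.norm_eq_abs, abs_of_pos (by linarith : (0:ℝ) < ε / 2)]
      linarith
    have hyRB : y ∈ R i ∩ B := interior_subset (hball hyball)
    have h1 : ∀ k, k ≠ j → z k = y k := by
      intro k hk; simp [hy, Pi.single_apply, hk]
    have h2 : z j ≤ y j := by simp [hy]; linarith
    have := hmono z hzRB.2 y hyRB.2 h1 h2
    rw [haff i z hzRB.1, haff i y hyRB.1] at this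
    have hdot : a i ⬝ᵥ y = a i ⬝ᵥ z + a i j * (ε / 2) := by
      rw [hy, dotProduct_add, dotProduct_single]
    nlinarith
end
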